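/- arXiv:1403.6887 — 6 statements merged into one kernel-verified Lean document; each statement's English description precedes it below -/
import Mathlib

section
/- For any positive integer T, (1/T^2) * Σ_{k=1}^{T} ((k-1)/(T-k+1)) * (2T+1-2k) = 1 - (1/T) * Σ_{k=1}^{T} (1/k). -/
/-! Writing `j = T + 1 - k`, the `k`-th summand is `(T - j)(2j - 1)/j = (2k - 1) - T/j`. The odd
numbers `2k - 1` sum to `T²`, and as `k` runs over `1, …, T` so does `j`, so the second part sums
to `T` times the harmonic number. -/

open Finset

theorem Finset.sum_Icc_one_reflect {M : Type*} [AddCommMonoid M] (f : ℕ → M) (n : ℕ) :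
    ∑ k ∈ Icc 1 n, f (n + 1 - k) = ∑ k ∈ Icc 1 n, f k :=
  sum_nbij' (fun k ↦ n + 1 - k) (fun k ↦ n + 1 - k)
    (fun k hk ↦ by simp only [mem_Icc] at hk ⊢; omega)
    (fun k hk ↦ by simp only [mem_Icc] at hk ⊢; omega)
    (fun k hk ↦ by simp only [mem_Icc] at hk; omega)
    (fun k hk ↦ by simp only [mem_Icc] at hk; omega)
    (fun _ _ ↦ rfl)

theorem Finset.sum_Icc_one_two_mul_sub_one (n : ℕ) :
    ∑ k ∈ Icc 1 n, (2 * (k : ℝ) - 1) = (n : ℝ) ^ 2 := by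
  induction n with
  | zero => simp
  | succ n ih =>
    rw [sum_Icc_succ_top (by omega), ih]
    push_cast
    ring

theorem Finset.sum_Icc_one_inv_reflect (n : ℕ) :
    ∑ k ∈ Icc 1 n, (1 : ℝ) / ((n : ℝ) - k + 1) = ∑ k ∈ Icc 1 n, (1 : ℝ) / k := by
  rw [← sum_Icc_one_reflect]
  refine sum_congr rfl fun k hk ↦ ?_
  rw [Nat.cast_sub (by simp only [mem_Icc] at hk; omega)]
  push_cast
  ring

theorem summand_eq_odd_sub {T k : ℕ} (hk : k ≤ T) :
    ((k : ℝ) - 1) / ((T : ℝ) - k + 1) * (2 * (T : ℝ) + 1 - 2 * k)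
      = (2 * (k : ℝ) - 1) - T * (1 / ((T : ℝ) - k + 1)) := by
  have hpos : (0 : ℝ) < (T : ℝ) - k + 1 := by
    have : (k : ℝ) ≤ T := by exact_mod_cast hk
    linarith
  field_simp
  ring

theorem stmt_0 (T : ℕ) (hT : 0 < T) :
    (1 / (T : ℝ) ^ 2) *
      ∑ k ∈ Finset.Icc 1 T, (((k : ℝ) - 1) / ((T : ℝ) - k + 1)) * (2 * (T : ℝ) + 1 - 2 * k)
    = 1 - (1 / (T : ℝ)) * ∑ k ∈ Finset.Icc 1 T, (1 : ℝ) / k := by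
  have hsum : ∑ k ∈ Icc 1 T, ((k : ℝ) - 1) / ((T : ℝ) - k + 1) * (2 * (T : ℝ) + 1 - 2 * k)
      = (T : ℝ) ^ 2 - T * ∑ k ∈ Icc 1 T, (1 : ℝ) / k := by
    rw [sum_congr rfl fun k hk ↦ summand_eq_odd_sub (mem_Icc.mp hk).2, sum_sub_distrib,
      sum_Icc_one_two_mul_sub_one, ← mul_sum, sum_Icc_one_inv_reflect]
  have hT0 : (T : ℝ) ≠ 0 := by positivity
  rw [hsum]
  field_simp
end

section
/- Let T ≥ 1 and define the T×T real matrix B by B_{tτ} = (τ-1)/(T(T-τ+1)) if τ ≤ t and B_{tτ} = -1/T if τ > t (indices from 1 to T). Then trace(B Bᵀ) = Σ_{k=2}^{T} 1/k. -/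
/-! Compute `trace (B Bᵀ)` column by column. Column `τ` of `B` has `τ - 1` entries `-1/T` and
`T - τ + 1` entries `(τ - 1)/(T(T - τ + 1))`, so its squared norm is
`(τ - 1)/(T(T - τ + 1)) = 1/(T - τ + 1) - 1/T`. Summing over `τ` gives `H_T - 1`. -/

open Finset Matrix

theorem Matrix.trace_mul_transpose_self_eq_sum_sq {m n R : Type*} [Fintype m] [Fintype n]
    [Semiring R] (A : Matrix m n R) :
    (A * Aᵀ).trace = ∑ j, ∑ i, A i j ^ 2 := by
  rw [Finset.sum_comm]
  simp only [trace, diag, mul_apply, transpose_apply, sq]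

/-- The matrix `B` indexed from `0`: entry `(t, τ)` is `B_{t+1, τ+1}`. -/
noncomputable def loadSensitivityMatrix (T : ℕ) : Matrix (Fin T) (Fin T) ℝ :=
  fun t τ => if τ ≤ t then (τ : ℝ) / (T * (T - τ)) else -(1 / T)

lemma Fin.sum_ite_le {M : Type*} [AddCommMonoid M] {T : ℕ} (j : Fin T) (a b : M) :
    ∑ t : Fin T, (if j ≤ t then a else b) = (T - j) • a + (j : ℕ) • b := by
  rw [Finset.sum_ite, Finset.sum_const, Finset.sum_const, Finset.filter_le_eq_Ici]
  simp only [not_le, Finset.filter_gt_eq_Iio, Fin.card_Ici, Fin.card_Iio]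

lemma loadSensitivityMatrix_column_sum_sq {T : ℕ} (j : Fin T) :
    ∑ t, loadSensitivityMatrix T t j ^ 2 = 1 / (T - j) - 1 / T := by
  have hj : (j : ℝ) < T := by exact_mod_cast j.isLt
  have hT : (0 : ℝ) < T := by linarith [(j : ℕ).cast_nonneg (α := ℝ)]
  simp only [loadSensitivityMatrix, apply_ite (· ^ 2)]
  rw [Fin.sum_ite_le, nsmul_eq_mul, nsmul_eq_mul, Nat.cast_sub j.isLt.le]
  field_simp [(sub_pos.2 hj).ne']
  ring

lemma Fin.sum_one_div_sub (T : ℕ) :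
    ∑ j : Fin T, (1 : ℝ) / (T - j) = ∑ k ∈ Icc 1 T, (1 : ℝ) / k := by
  rw [Fin.sum_univ_eq_sum_range (fun j => (1 : ℝ) / (T - j)), ← Finset.sum_range_reflect,
    ← Finset.Ico_add_one_right_eq_Icc, Finset.sum_Ico_eq_sum_range, Nat.add_sub_cancel]
  refine Finset.sum_congr rfl fun j hj => ?_
  rw [Finset.mem_range] at hj
  rw [Nat.sub_sub, Nat.cast_sub (by omega)]
  push_cast
  ring

theorem stmt_1_general (T : ℕ)
    (B : Matrix (Fin T) (Fin T) ℝ)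
    (hB : ∀ t τ : Fin T,
      B t τ = if (τ : ℕ) + 1 ≤ (t : ℕ) + 1
        then (((τ : ℕ) + 1 : ℝ) - 1) / ((T : ℝ) * ((T : ℝ) - ((τ : ℕ) + 1) + 1))
        else -(1 / (T : ℝ))) :
    (B * Bᵀ).trace = ∑ k ∈ Finset.Icc 2 T, (1 : ℝ) / k := by
  obtain rfl : B = loadSensitivityMatrix T := by
    ext t τ
    rw [hB, loadSensitivityMatrix]
    simp only [add_le_add_iff_right, Fin.val_fin_le, add_sub_cancel_right]
    ring_nf
  rw [trace_mul_transpose_self_eq_sum_sq]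
  simp only [loadSensitivityMatrix_column_sum_sq, Finset.sum_sub_distrib, Fin.sum_one_div_sub]
  obtain rfl | hT := T.eq_zero_or_pos
  · simp
  rw [Finset.Icc_eq_cons_Ioc hT, Finset.sum_cons, ← Finset.Icc_add_one_left_eq_Ioc]
  simp [hT.ne']

theorem stmt_1 (T : ℕ) (hT : 1 ≤ T)
    (B : Matrix (Fin T) (Fin T) ℝ)
    (hB : ∀ t τ : Fin T,
      B t τ = if (τ : ℕ) + 1 ≤ (t : ℕ) + 1
        then (((τ : ℕ) + 1 : ℝ) - 1) / ((T : ℝ) * ((T : ℝ) - ((τ : ℕ) + 1) + 1))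
        else -(1 / (T : ℝ))) :
    (B * Bᵀ).trace = ∑ k ∈ Finset.Icc 2 T, (1 : ℝ) / k :=
  stmt_1_general T B hB
end

section
/- Let T ≥ 1, let x ∈ ℝ^T, and define V₁ = (1/T) Σ_{t=1}^{T} ( Σ_{τ=1}^{t} ((τ-1)/(T(T-τ+1))) x(τ) - Σ_{τ=t+1}^{T} (1/T) x(τ) )². Then V₁ = (1/T²) Σ_{τ=1}^{T} Σ_{s=1}^{T} ( T/(T - min(τ,s) + 1) - 1 ) x(τ) x(s). -/
open Finset

/-!
Write the prediction error at time `t` as a linear form `∑ τ, w t τ * x τ`, where `w t τ` is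
`(τ - 1) / (T (T - τ + 1))` if `τ ≤ t` and `-1/T` otherwise. Squaring and summing over `t`
gives the quadratic form of the Gram matrix `∑ t, w t τ * w t s`. For `τ ≤ s`, the weights are
constant on each of the ranges `t < τ`, `τ ≤ t < s` and `s ≤ t`, so that Gram entry is a sum
of three terms, which collapses to `(T / (T - τ + 1) - 1) / T`.
-/

theorem Finset.sum_sq_sum_mul_eq_sum_sum {ι κ R : Type*} [CommSemiring R]
    (u : Finset κ) (s : Finset ι) (a : κ → ι → R) (x : ι → R) :
    ∑ t ∈ u, (∑ i ∈ s, a t i * x i) ^ 2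
      = ∑ i ∈ s, ∑ j ∈ s, (∑ t ∈ u, a t i * a t j) * x i * x j := by
  simp_rw [sq, sum_mul_sum, sum_mul]
  rw [sum_comm]
  refine sum_congr rfl fun i _ => ?_
  rw [sum_comm]
  exact sum_congr rfl fun j _ => sum_congr rfl fun t _ => by ring

noncomputable def errorWeight (T t τ : ℕ) : ℝ :=
  if τ ≤ t then ((τ : ℝ) - 1) / ((T : ℝ) * ((T : ℝ) - τ + 1)) else -(1 / (T : ℝ))

theorem sum_errorWeight_mul {T t : ℕ} (ht : t ≤ T) (x : ℕ → ℝ) :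
    ∑ τ ∈ Icc 1 t, (((τ : ℝ) - 1) / ((T : ℝ) * ((T : ℝ) - τ + 1))) * x τ
        - ∑ τ ∈ Icc (t + 1) T, (1 / (T : ℝ)) * x τ
      = ∑ τ ∈ Icc 1 T, errorWeight T t τ * x τ := by
  rw [← Ico_add_one_right_eq_Icc 1 T,
    ← sum_Ico_consecutive _ (by omega : 1 ≤ t + 1) (by omega : t + 1 ≤ T + 1),
    Ico_add_one_right_eq_Icc, Ico_add_one_right_eq_Icc, sub_eq_add_neg, ← sum_neg_distrib]
  congr 1 <;> refine sum_congr rfl fun τ hτ => ?_ <;> rw [mem_Icc] at hτ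
  · rw [errorWeight, if_pos hτ.2]
  · rw [errorWeight, if_neg (by omega)]
    ring

theorem sum_errorWeight_mul_errorWeight {T τ s : ℕ} (hτ : 1 ≤ τ) (hτs : τ ≤ s) (hs : s ≤ T) :
    ∑ t ∈ Icc 1 T, errorWeight T t τ * errorWeight T t s
      = 1 / (T : ℝ) * ((T : ℝ) / ((T : ℝ) - τ + 1) - 1) := by
  have hsT : s ≤ T + 1 := by omega
  rw [← Ico_add_one_right_eq_Icc, ← sum_Ico_consecutive _ hτ (hτs.trans hsT),
    ← sum_Ico_consecutive _ hτs hsT]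
  have before : ∀ t ∈ Ico 1 τ, errorWeight T t τ * errorWeight T t s = (-(1 / T)) * (-(1 / T)) :=
    fun t ht => by rw [mem_Ico] at ht; simp only [errorWeight, if_neg (by omega : ¬τ ≤ t),
      if_neg (by omega : ¬s ≤ t)]
  have between : ∀ t ∈ Ico τ s, errorWeight T t τ * errorWeight T t s
      = ((τ : ℝ) - 1) / ((T : ℝ) * ((T : ℝ) - τ + 1)) * (-(1 / T)) :=
    fun t ht => by rw [mem_Ico] at ht; simp only [errorWeight, if_pos ht.1,
      if_neg (by omega : ¬s ≤ t)]
  have after : ∀ t ∈ Ico s (T + 1), errorWeight T t τ * errorWeight T t s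
      = ((τ : ℝ) - 1) / ((T : ℝ) * ((T : ℝ) - τ + 1))
        * (((s : ℝ) - 1) / ((T : ℝ) * ((T : ℝ) - s + 1))) :=
    fun t ht => by rw [mem_Ico] at ht; simp only [errorWeight, if_pos (hτs.trans ht.1),
      if_pos ht.1]
  rw [sum_eq_card_nsmul before, sum_eq_card_nsmul between, sum_eq_card_nsmul after]
  simp only [Nat.card_Ico, nsmul_eq_mul]
  have hT : (T : ℝ) ≠ 0 := by norm_cast; omega
  have hτT_real : (τ : ℝ) ≤ T := by norm_cast; omega
  have hsT_real : (s : ℝ) ≤ T := by norm_cast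
  have hdτ : (T : ℝ) - τ + 1 ≠ 0 := by linarith
  have hds : (T : ℝ) - s + 1 ≠ 0 := by linarith
  push_cast [Nat.cast_sub hτ, Nat.cast_sub hτs, Nat.cast_sub hsT]
  field_simp
  ring

theorem sum_errorWeight_mul_errorWeight_min {T τ s : ℕ} (hτ : τ ∈ Icc 1 T) (hs : s ∈ Icc 1 T) :
    ∑ t ∈ Icc 1 T, errorWeight T t τ * errorWeight T t s
      = 1 / (T : ℝ) * ((T : ℝ) / ((T : ℝ) - (min τ s : ℕ) + 1) - 1) := by
  rw [mem_Icc] at hτ hs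
  rcases le_total τ s with h | h
  · rw [min_eq_left h, sum_errorWeight_mul_errorWeight hτ.1 h hs.2]
  · simp_rw [min_eq_right h, mul_comm (errorWeight T _ τ)]
    exact sum_errorWeight_mul_errorWeight hs.1 h hτ.2

theorem stmt_3_general (T : ℕ) (x : ℕ → ℝ) :
    (1 / (T : ℝ)) * ∑ t ∈ Finset.Icc 1 T,
      (∑ τ ∈ Finset.Icc 1 t, (((τ : ℝ) - 1) / ((T : ℝ) * ((T : ℝ) - τ + 1))) * x τ
        - ∑ τ ∈ Finset.Icc (t + 1) T, (1 / (T : ℝ)) * x τ) ^ 2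
    = (1 / (T : ℝ) ^ 2) * ∑ τ ∈ Finset.Icc 1 T, ∑ s ∈ Finset.Icc 1 T,
        ((T : ℝ) / ((T : ℝ) - (min τ s : ℕ) + 1) - 1) * x τ * x s := by
  rw [sum_congr rfl fun t ht => by rw [sum_errorWeight_mul (mem_Icc.mp ht).2],
    sum_sq_sum_mul_eq_sum_sum, mul_sum, mul_sum]
  refine sum_congr rfl fun τ hτ => ?_
  rw [mul_sum, mul_sum]
  refine sum_congr rfl fun s hs => ?_
  rw [sum_errorWeight_mul_errorWeight_min hτ hs]
  ring

theorem stmt_3 (T : ℕ) (hT : 1 ≤ T) (x : ℕ → ℝ) :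
    (1 / (T : ℝ)) * ∑ t ∈ Finset.Icc 1 T,
      (∑ τ ∈ Finset.Icc 1 t, (((τ : ℝ) - 1) / ((T : ℝ) * ((T : ℝ) - τ + 1))) * x τ
        - ∑ τ ∈ Finset.Icc (t + 1) T, (1 / (T : ℝ)) * x τ) ^ 2
    = (1 / (T : ℝ) ^ 2) * ∑ τ ∈ Finset.Icc 1 T, ∑ s ∈ Finset.Icc 1 T,
        ((T : ℝ) / ((T : ℝ) - (min τ s : ℕ) + 1) - 1) * x τ * x s :=
  stmt_3_general T x
end

section
/- Let T ≥ 1 and let x ∈ ℝ^T satisfy |x(t)| ≤ ε for all t. Define V₁ = (1/T²) Σ_{τ=1}^{T} Σ_{s=1}^{T} ((min(τ,s)-1)/(T - min(τ,s) + 1)) x(τ) x(s). Then V₁ ≤ ε² (1 - (1/T) Σ_{k=1}^{T} 1/k), with equality when x(t) = ε for all t. -/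
/-!
The weight `(m - 1)/(T - m + 1)` of the pair `(τ, s)` with `m = min τ s` telescopes as
`∑_{k=2}^{m} T/((T-k+1)(T-k+2))`, so swapping the sums writes `T² V₁` as the nonnegative
combination `∑_{k=2}^{T} T/((T-k+1)(T-k+2)) · (∑_{t ≥ k} x t)²` of squared tail sums.
Each tail sum has absolute value at most `ε (T - k + 1)`, with equality when `x ≡ ε`, and the
resulting bound sums to `ε² T (T - H_T)`.
-/

open Finset

theorem sum_sum_sum_filter_le_mul_eq_sum_mul_sq {ι : Type*} [LinearOrder ι] (K S : Finset ι) (c x : ι → ℝ) :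
    ∑ τ ∈ S, ∑ s ∈ S, (∑ k ∈ K with k ≤ τ ∧ k ≤ s, c k) * x τ * x s
      = ∑ k ∈ K, c k * (∑ t ∈ S with k ≤ t, x t) ^ 2 := by
  simp only [sum_filter, sum_mul, sq, mul_sum, ite_and]
  refine (sum_comm.trans (sum_congr rfl fun τ _ => sum_comm)).symm.trans ?_
  refine sum_congr rfl fun τ _ => sum_congr rfl fun s _ => sum_congr rfl fun k _ => ?_
  split_ifs <;> ring

theorem sum_Icc_reflect {M : Type*} [AddCommMonoid M] (f : ℕ → M) (a b : ℕ) :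
    ∑ k ∈ Icc a b, f (a + b - k) = ∑ k ∈ Icc a b, f k := by
  refine sum_nbij' (fun k => a + b - k) (fun k => a + b - k) ?_ ?_ ?_ ?_ fun _ _ => rfl <;>
    intro k hk <;> simp only [mem_Icc] at hk ⊢ <;> omega

theorem abs_sum_le_card_mul {ι : Type*} (s : Finset ι) (x : ι → ℝ) {ε : ℝ}
    (hx : ∀ t ∈ s, |x t| ≤ ε) : |∑ t ∈ s, x t| ≤ #s * ε := by
  rw [← nsmul_eq_mul]
  exact (abs_sum_le_sum_abs x s).trans (sum_le_card_nsmul s _ ε hx)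

theorem natCast_card_Icc {k T : ℕ} (hk : k ≤ T + 1) : ((#(Icc k T) : ℕ) : ℝ) = T - k + 1 := by
  rw [Nat.card_Icc, Nat.cast_sub hk]
  push_cast
  ring

noncomputable def mpcWeight (T k : ℕ) : ℝ := T / ((T - k + 1) * (T - k + 2))

theorem mpcWeight_nonneg {T k : ℕ} (hk : k ≤ T) : 0 ≤ mpcWeight T k := by
  have hkT : (k : ℝ) ≤ T := by exact_mod_cast hk
  have hpos : (0 : ℝ) < T - k + 1 := by linarith
  unfold mpcWeight
  positivity

theorem mpcWeight_eq_sub {T k : ℕ} (hk : k ≤ T) :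
    mpcWeight T k = T / (T - k + 1) - T / (T - k + 2) := by
  have hkT : (k : ℝ) ≤ T := by exact_mod_cast hk
  rw [mpcWeight, div_sub_div _ _ (by linarith) (by linarith)]
  congr 1
  ring

theorem sum_mpcWeight_Icc {T m : ℕ} (hm : 1 ≤ m) (hmT : m ≤ T) :
    ∑ k ∈ Icc 2 m, mpcWeight T k = ((m : ℝ) - 1) / (T - m + 1) := by
  induction m, hm using Nat.le_induction with
  | base => simp
  | succ n hn ih =>
    have hnT : (n : ℝ) + 1 ≤ T := by exact_mod_cast hmT
    have h1 : (T : ℝ) - n + 1 ≠ 0 := by linarith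
    have h2 : (T : ℝ) - n ≠ 0 := by linarith
    rw [sum_Icc_succ_top (by omega), ih (by omega), mpcWeight_eq_sub hmT]
    push_cast
    rw [show (T : ℝ) - (n + 1) + 1 = T - n by ring, show (T : ℝ) - (n + 1) + 2 = T - n + 1 by ring]
    field_simp
    ring

theorem mpcWeight_mul_sq {T k : ℕ} (hk : k ≤ T) :
    mpcWeight T k * (T - k + 1) ^ 2 = T - T / (T - k + 2) := by
  have hkT : (k : ℝ) ≤ T := by exact_mod_cast hk
  have h1 : (T : ℝ) - k + 1 ≠ 0 := by linarith
  have h2 : (T : ℝ) - k + 2 ≠ 0 := by linarith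
  unfold mpcWeight
  field_simp
  ring

theorem sum_mpcWeight_mul_sq {T : ℕ} (hT : 1 ≤ T) :
    ∑ k ∈ Icc 2 T, mpcWeight T k * (T - k + 1) ^ 2
      = T * (T - ∑ k ∈ Icc 1 T, (1 : ℝ) / k) := by
  have hreflect : ∑ k ∈ Icc 2 T, (T : ℝ) / (T - k + 2) = T * ∑ k ∈ Icc 2 T, (1 : ℝ) / k := by
    rw [mul_sum, ← sum_Icc_reflect _ 2 T]
    refine sum_congr rfl fun k hk => ?_
    rw [Nat.cast_sub (by simp only [mem_Icc] at hk; omega)]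
    push_cast
    ring
  have hharmonic : ∑ k ∈ Icc 1 T, (1 : ℝ) / k = 1 + ∑ k ∈ Icc 2 T, (1 : ℝ) / k := by
    rw [← add_sum_Ioc_eq_sum_Icc hT, ← Icc_add_one_left_eq_Ioc]
    norm_num
  rw [sum_congr rfl fun k hk => mpcWeight_mul_sq (mem_Icc.mp hk).2, sum_sub_distrib, sum_const,
    nsmul_eq_mul, natCast_card_Icc (by omega), hreflect, hharmonic]
  push_cast
  ring

theorem sum_sum_min_mul_eq_sum_mpcWeight_mul_sq (T : ℕ) (x : ℕ → ℝ) :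
    ∑ τ ∈ Icc 1 T, ∑ s ∈ Icc 1 T,
        (((min τ s : ℕ) - 1 : ℝ) / ((T : ℝ) - (min τ s : ℕ) + 1)) * x τ * x s
      = ∑ k ∈ Icc 2 T, mpcWeight T k * (∑ t ∈ Icc k T, x t) ^ 2 := by
  have hweight : ∀ τ ∈ Icc 1 T, ∀ s ∈ Icc 1 T, ((min τ s : ℕ) - 1 : ℝ) / (T - (min τ s : ℕ) + 1)
      = ∑ k ∈ Icc 2 T with k ≤ τ ∧ k ≤ s, mpcWeight T k := by
    intro τ hτ s hs
    simp only [mem_Icc] at hτ hs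
    rw [← sum_mpcWeight_Icc (le_min hτ.1 hs.1) (min_le_left _ _ |>.trans hτ.2)]
    congr 1
    ext k
    simp only [mem_filter, mem_Icc, le_min_iff]
    omega
  have htail : ∀ k ∈ Icc 2 T, {t ∈ Icc 1 T | k ≤ t} = Icc k T := by
    intro k hk
    ext t
    simp only [mem_filter, mem_Icc] at hk ⊢
    omega
  rw [sum_congr rfl fun τ hτ => sum_congr rfl fun s hs => by rw [hweight τ hτ s hs],
    sum_sum_sum_filter_le_mul_eq_sum_mul_sq]
  exact sum_congr rfl fun k hk => by rw [htail k hk]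

theorem stmt_4_general (T : ℕ) (hT : 1 ≤ T) (ε : ℝ) (x : ℕ → ℝ)
    (hx : ∀ t ∈ Finset.Icc 1 T, |x t| ≤ ε) :
    (1 / (T : ℝ) ^ 2) * ∑ τ ∈ Finset.Icc 1 T, ∑ s ∈ Finset.Icc 1 T,
        (((min τ s : ℕ) - 1 : ℝ) / ((T : ℝ) - (min τ s : ℕ) + 1)) * x τ * x s
      ≤ ε ^ 2 * (1 - (1 / (T : ℝ)) * ∑ k ∈ Finset.Icc 1 T, (1 : ℝ) / k)
    ∧ ((∀ t ∈ Finset.Icc 1 T, x t = ε) →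
      (1 / (T : ℝ) ^ 2) * ∑ τ ∈ Finset.Icc 1 T, ∑ s ∈ Finset.Icc 1 T,
          (((min τ s : ℕ) - 1 : ℝ) / ((T : ℝ) - (min τ s : ℕ) + 1)) * x τ * x s
        = ε ^ 2 * (1 - (1 / (T : ℝ)) * ∑ k ∈ Finset.Icc 1 T, (1 : ℝ) / k)) := by
  have hT0 : (T : ℝ) ≠ 0 := by positivity
  have hextremal : 1 / (T : ℝ) ^ 2 * ∑ k ∈ Icc 2 T, mpcWeight T k * (ε * (T - k + 1)) ^ 2
      = ε ^ 2 * (1 - 1 / (T : ℝ) * ∑ k ∈ Icc 1 T, (1 : ℝ) / k) := by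
    simp only [mul_pow, mul_left_comm _ (ε ^ 2), ← mul_sum, sum_mpcWeight_mul_sq hT]
    field_simp
  have hsub {k : ℕ} (hk : k ∈ Icc 2 T) : Icc k T ⊆ Icc 1 T :=
    Icc_subset_Icc_left (by simp only [mem_Icc] at hk; omega)
  rw [sum_sum_min_mul_eq_sum_mpcWeight_mul_sq, ← hextremal]
  refine ⟨?_, fun hxε => ?_⟩
  · refine mul_le_mul_of_nonneg_left (sum_le_sum fun k hk => ?_) (by positivity)
    refine mul_le_mul_of_nonneg_left ?_ (mpcWeight_nonneg (mem_Icc.mp hk).2)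
    rw [← sq_abs, ← natCast_card_Icc (by simp only [mem_Icc] at hk; omega), mul_comm ε]
    exact pow_le_pow_left₀ (abs_nonneg _)
      (abs_sum_le_card_mul _ x fun t ht => hx t (hsub hk ht)) 2
  · refine congrArg _ (sum_congr rfl fun k hk => ?_)
    rw [sum_congr rfl fun t ht => hxε t (hsub hk ht), sum_const, nsmul_eq_mul,
      natCast_card_Icc (by simp only [mem_Icc] at hk; omega), mul_comm _ ε]

theorem stmt_4 (T : ℕ) (hT : 1 ≤ T) (ε : ℝ) (hε : 0 < ε) (x : ℕ → ℝ)
    (hx : ∀ t ∈ Finset.Icc 1 T, |x t| ≤ ε) :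
    (1 / (T : ℝ) ^ 2) * ∑ τ ∈ Finset.Icc 1 T, ∑ s ∈ Finset.Icc 1 T,
        (((min τ s : ℕ) - 1 : ℝ) / ((T : ℝ) - (min τ s : ℕ) + 1)) * x τ * x s
      ≤ ε ^ 2 * (1 - (1 / (T : ℝ)) * ∑ k ∈ Finset.Icc 1 T, (1 : ℝ) / k)
    ∧ ((∀ t ∈ Finset.Icc 1 T, x t = ε) →
      (1 / (T : ℝ) ^ 2) * ∑ τ ∈ Finset.Icc 1 T, ∑ s ∈ Finset.Icc 1 T,
          (((min τ s : ℕ) - 1 : ℝ) / ((T : ℝ) - (min τ s : ℕ) + 1)) * x τ * x s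
        = ε ^ 2 * (1 - (1 / (T : ℝ)) * ∑ k ∈ Finset.Icc 1 T, (1 : ℝ) / k)) :=
  stmt_4_general T hT ε x hx
end

section
/- Let f : ℝⁿ → ℝ be convex and differentiable, let X be a random vector supported on [-d/2, d/2]ⁿ with E[f(X)] = 0, and suppose the self-bounding property ‖∇f(x)‖² ≤ a f(x) + b holds for all x in the support, with a, b ≥ 0. Assume the log-Sobolev-type inequality E[e^{g(X)} g(X)] - E[e^{g(X)}] log E[e^{g(X)}] ≤ (d²/2) E[e^{g(X)} ‖∇g(X)‖²] holds for every convex differentiable g. Then for all t > 0, P(f(X) > t) ≤ exp( -t² / (d²(2b + a t)) ). -/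
open MeasureTheory Set

/-!
Herbst's argument. As `f` is continuous and `μ` lives on a compact cube, `f` is `μ`-a.e. bounded,
so its cumulant generating function `H λ = log ∫ exp (λ f) dμ` is smooth with `H 0 = H' 0 = 0`.
The log-Sobolev inequality for the convex function `λ f`, combined with the self-bounding property,
gives `λ (1 - c λ) H' λ ≤ H λ + β λ²` with `c = a d² / 2`, `β = b d² / 2`. Hence
`λ ↦ H λ (1 - c λ) / λ - β λ` is nonincreasing with limit `0` at `0⁺`, i.e. `H λ ≤ β λ² / (1 - c λ)`,
and the Chernoff bound at `λ = t / (d² (b + a t))` gives the claim.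
-/

open Filter Real ProbabilityTheory Topology

lemma isCompact_setOf_forall_abs_le {ι : Type*} [Fintype ι] (r : ℝ) :
    IsCompact {x : EuclideanSpace ℝ ι | ∀ i, |x i| ≤ r} := by
  have : {x : EuclideanSpace ℝ ι | ∀ i, |x i| ≤ r} =
      WithLp.toLp 2 '' univ.pi fun _ => Icc (-r) r := by
    ext x
    refine ⟨fun hx => ⟨x.ofLp, fun i _ => abs_le.1 (hx i), rfl⟩, ?_⟩
    rintro ⟨y, hy, rfl⟩ i
    exact abs_le.2 (hy i trivial)
  rw [this]
  exact (isCompact_univ_pi fun _ => isCompact_Icc).image (PiLp.continuous_toLp 2 _)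

lemma exists_ae_mem_Icc_of_ae_mem_isCompact {α : Type*} [TopologicalSpace α] [MeasurableSpace α]
    {μ : Measure α} {K : Set α} {f : α → ℝ} (hK : IsCompact K) (hf : ContinuousOn f K)
    (hμK : ∀ᵐ x ∂μ, x ∈ K) : ∃ m M, ∀ᵐ x ∂μ, f x ∈ Icc m M := by
  obtain ⟨m, hm⟩ := hK.bddBelow_image hf
  obtain ⟨M, hM⟩ := hK.bddAbove_image hf
  exact ⟨m, M, hμK.mono fun x hx => ⟨hm (mem_image_of_mem f hx), hM (mem_image_of_mem f hx)⟩⟩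

lemma integrableExpSet_eq_univ_of_ae_mem_Icc {Ω : Type*} [MeasurableSpace Ω] {μ : Measure Ω}
    [IsFiniteMeasure μ] {X : Ω → ℝ} {m M : ℝ} (hX : AEMeasurable X μ)
    (hXmM : ∀ᵐ ω ∂μ, X ω ∈ Icc m M) : integrableExpSet X μ = univ :=
  eq_univ_of_forall fun _ => integrable_exp_mul_of_mem_Icc hX hXmM

lemma gradient_const_mul {F : Type*} [NormedAddCommGroup F] [InnerProductSpace ℝ F]
    [CompleteSpace F] (f : F → ℝ) (c : ℝ) (x : F) :
    gradient (fun y => c * f y) x = c • gradient f x := by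
  have : (fun y => c * f y) = c • f := rfl
  simp [gradient, this, fderiv_const_smul_field]

lemma tendsto_div_nhdsGT_zero_of_differentiableAt {H : ℝ → ℝ} (hH : DifferentiableAt ℝ H 0)
    (hH0 : H 0 = 0) : Tendsto (fun l => H l / l) (𝓝[>] 0) (𝓝 (deriv H 0)) := by
  refine (hH.hasDerivAt.tendsto_slope.mono_left (nhdsGT_le_nhdsNE 0)).congr fun l => ?_
  simp [slope_def_field, hH0]

lemma le_div_of_mul_deriv_le {H : ℝ → ℝ} {c β Λ : ℝ} (hΛ : 0 < Λ) (hcΛ : c * Λ < 1)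
    (hH : ∀ l ∈ Icc 0 Λ, DifferentiableAt ℝ H l) (hH0 : H 0 = 0) (hH'0 : deriv H 0 = 0)
    (hineq : ∀ l ∈ Ioc 0 Λ, l * (1 - c * l) * deriv H l ≤ H l + β * l ^ 2) :
    H Λ ≤ β * Λ ^ 2 / (1 - c * Λ) := by
  set w : ℝ → ℝ := fun l => H l / l * (1 - c * l) - β * l
  have hw' : ∀ l ∈ Ioc 0 Λ, HasDerivAt w
      ((deriv H l * l - H l) / l ^ 2 * (1 - c * l) + H l / l * -c - β) l := by
    intro l hl
    refine (((hH l (Ioc_subset_Icc_self hl)).hasDerivAt.div (hasDerivAt_id' l) hl.1.ne').mul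
      (((hasDerivAt_id' l).const_mul c).const_sub 1)).sub ((hasDerivAt_id' l).const_mul β)
      |>.congr_deriv ?_
    simp only [Pi.div_apply]
    ring
  have hanti : AntitoneOn w (Ioc 0 Λ) := by
    refine antitoneOn_of_deriv_nonpos (convex_Ioc 0 Λ)
      (fun l hl => (hw' l hl).continuousAt.continuousWithinAt) (fun l hl => ?_) fun l hl => ?_
    · rw [interior_Ioc] at hl
      exact (hw' l (Ioo_subset_Ioc_self hl)).differentiableAt.differentiableWithinAt
    · rw [interior_Ioc] at hl
      have hl' := Ioo_subset_Ioc_self hl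
      rw [(hw' l hl').deriv]
      have h := hineq l hl'
      have hl0 := hl.1
      field_simp
      nlinarith
  have hw0 : Tendsto w (𝓝[>] 0) (𝓝 0) := by
    have hlin (p q : ℝ) : Tendsto (fun l : ℝ => p + q * l) (𝓝[>] 0) (𝓝 p) := by
      simpa using ((tendsto_id.const_mul q).const_add p).mono_left
        (nhdsWithin_le_nhds (a := (0 : ℝ)))
    simpa [hH'0, w, sub_eq_add_neg] using
      ((tendsto_div_nhdsGT_zero_of_differentiableAt (hH 0 ⟨le_rfl, hΛ.le⟩) hH0).mul
        (hlin 1 (-c))).add (hlin 0 (-β))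
  have hwΛ : w Λ ≤ 0 := by
    refine ge_of_tendsto hw0 ?_
    filter_upwards [Ioc_mem_nhdsGT hΛ] with l hl
    exact hanti hl ⟨hΛ, le_rfl⟩ hl.2
  have h1 : 0 < 1 - c * Λ := by linarith
  simp only [w] at hwΛ
  rw [le_div_iff₀ h1]
  field_simp at hwΛ
  nlinarith

def ConvexLogSobolev {F : Type*} [NormedAddCommGroup F] [InnerProductSpace ℝ F]
    [CompleteSpace F] [MeasurableSpace F] (μ : Measure F) (C : ℝ) : Prop :=
  ∀ g : F → ℝ, ConvexOn ℝ univ g → Differentiable ℝ g →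
    (∫ x, exp (g x) * g x ∂μ) - (∫ x, exp (g x) ∂μ) * log (∫ x, exp (g x) ∂μ)
      ≤ C * ∫ x, exp (g x) * ‖gradient g x‖ ^ 2 ∂μ

namespace ConvexLogSobolev

variable {F : Type*} [NormedAddCommGroup F] [InnerProductSpace ℝ F] [CompleteSpace F]
  [MeasurableSpace F] {μ : Measure F} {f : F → ℝ} {C a b l : ℝ}

lemma mul_integral_sub_mgf_mul_cgf_le (hLS : ConvexLogSobolev μ C)
    (hC : 0 ≤ C) (hexp : integrableExpSet f μ = univ) (hconv : ConvexOn ℝ univ f)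
    (hdiff : Differentiable ℝ f) (hself : ∀ᵐ x ∂μ, ‖gradient f x‖ ^ 2 ≤ a * f x + b)
    (hl : 0 ≤ l) :
    l * μ[fun x => f x * exp (l * f x)] - mgf f μ l * cgf f μ l
      ≤ C * l ^ 2 * (a * μ[fun x => f x * exp (l * f x)] + b * mgf f μ l) := by
  have hint : Integrable (fun x => exp (l * f x)) μ := hexp.ge (mem_univ l)
  have hintf : Integrable (fun x => f x * exp (l * f x)) μ := by
    simpa using integrable_pow_mul_exp_of_mem_interior_integrableExpSet (by simp [hexp]) 1
  calc l * μ[fun x => f x * exp (l * f x)] - mgf f μ l * cgf f μ l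
      = (∫ x, exp (l * f x) * (l * f x) ∂μ)
          - (∫ x, exp (l * f x) ∂μ) * log (∫ x, exp (l * f x) ∂μ) := by
        rw [cgf, mgf, ← integral_const_mul]
        congr 2 with x
        ring
    _ ≤ C * ∫ x, exp (l * f x) * ‖gradient (fun y => l * f y) x‖ ^ 2 ∂μ :=
        hLS _ (by simpa using hconv.smul hl) (hdiff.const_mul l)
    _ = C * l ^ 2 * ∫ x, exp (l * f x) * ‖gradient f x‖ ^ 2 ∂μ := by
        simp_rw [gradient_const_mul, norm_smul, mul_pow, norm_eq_abs, sq_abs,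
          mul_left_comm _ (l ^ 2), integral_const_mul, mul_assoc]
    _ ≤ C * l ^ 2 * ∫ x, exp (l * f x) * (a * f x + b) ∂μ := by
        refine mul_le_mul_of_nonneg_left (integral_mono_of_nonneg
          (ae_of_all _ fun x => by positivity)
          ((hintf.const_mul a).add (hint.const_mul b) |>.congr
            (ae_of_all _ fun x => by simp only [Pi.add_apply]; ring)) ?_) (by positivity)
        filter_upwards [hself] with x hx
        gcongr
    _ = C * l ^ 2 * (a * μ[fun x => f x * exp (l * f x)] + b * mgf f μ l) := by
        congr 1
        rw [mgf, ← integral_const_mul, ← integral_const_mul,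
          ← integral_add (hintf.const_mul a) (hint.const_mul b)]
        congr 1 with x
        ring

lemma mul_one_sub_mul_deriv_cgf_le [IsProbabilityMeasure μ]
    (hLS : ConvexLogSobolev μ C) (hC : 0 ≤ C) (hexp : integrableExpSet f μ = univ)
    (hconv : ConvexOn ℝ univ f) (hdiff : Differentiable ℝ f)
    (hself : ∀ᵐ x ∂μ, ‖gradient f x‖ ^ 2 ≤ a * f x + b) (hl : 0 ≤ l) :
    l * (1 - C * a * l) * deriv (cgf f μ) l ≤ cgf f μ l + C * b * l ^ 2 := by
  have hmgf : 0 < mgf f μ l := mgf_pos (hexp.ge (mem_univ l))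
  have h := hLS.mul_integral_sub_mgf_mul_cgf_le hC hexp hconv hdiff hself hl
  rw [deriv_cgf (by simp [hexp]), ← mul_le_mul_iff_left₀ hmgf]
  field_simp
  linarith

end ConvexLogSobolev

lemma measureReal_ge_le_exp_of_cgf_le {Ω : Type*} [MeasurableSpace Ω] {μ : Measure Ω}
    [IsProbabilityMeasure μ] {X : Ω → ℝ} {v c t : ℝ} (hc : 0 ≤ c) (ht : 0 < t)
    (hexp : integrableExpSet X μ = univ)
    (hcgf : ∀ Λ, 0 < Λ → c * Λ < 1 → cgf X μ Λ ≤ v * Λ ^ 2 / (2 * (1 - c * Λ))) :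
    μ.real {ω | t ≤ X ω} ≤ exp (-t ^ 2 / (2 * (v + c * t))) := by
  rcases le_or_gt (v + c * t) 0 with hvct | hvct
  · refine measureReal_le_one.trans (one_le_exp (div_nonneg_of_nonpos ?_ ?_)) <;> nlinarith
  set E := v + c * t with hE
  set D := v + 2 * c * t with hD
  have hD0 : 0 < D := by nlinarith
  -- `λ = t / D` gives the same exponent as the usual `t / E` but keeps `c λ < 1` even when `v ≤ 0`
  have hΛ : 0 < t / D := div_pos ht hD0
  have hcΛ : 1 - c * (t / D) = E / D := by
    field_simp
    linarith
  calc μ.real {ω | t ≤ X ω} ≤ exp (-(t / D) * t + cgf X μ (t / D)) :=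
        measure_ge_le_exp_cgf t hΛ.le (hexp.ge (mem_univ _))
    _ ≤ exp (-(t / D) * t + v * (t / D) ^ 2 / (2 * (1 - c * (t / D)))) := by
        gcongr
        refine hcgf _ hΛ ?_
        have : 0 < 1 - c * (t / D) := by rw [hcΛ]; positivity
        linarith
    _ = exp (-t ^ 2 / (2 * E)) := by
        rw [hcΛ]
        congr 1
        field_simp
        linarith

theorem stmt_7_general (n : ℕ)
    (μ : Measure (EuclideanSpace ℝ (Fin n))) [IsProbabilityMeasure μ]
    (f : EuclideanSpace ℝ (Fin n) → ℝ) (d a b : ℝ)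
    (ha : 0 ≤ a)
    (hconv : ConvexOn ℝ Set.univ f)
    (hdiff : Differentiable ℝ f)
    (hsupp : ∀ᵐ x ∂μ, ∀ i, |x i| ≤ d / 2)
    (hmean : ∫ x, f x ∂μ = 0)
    (hself : ∀ x : EuclideanSpace ℝ (Fin n),
      (∀ i, |x i| ≤ d / 2) → ‖gradient f x‖ ^ 2 ≤ a * f x + b)
    (hLS : ∀ g : EuclideanSpace ℝ (Fin n) → ℝ,
      ConvexOn ℝ Set.univ g → Differentiable ℝ g →
      (∫ x, Real.exp (g x) * g x ∂μ)
        - (∫ x, Real.exp (g x) ∂μ) * Real.log (∫ x, Real.exp (g x) ∂μ)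
      ≤ d ^ 2 / 2 * ∫ x, Real.exp (g x) * ‖gradient g x‖ ^ 2 ∂μ) :
    ∀ t : ℝ, 0 < t →
      (μ {x | f x > t}).toReal ≤ Real.exp (-t ^ 2 / (d ^ 2 * (2 * b + a * t))) := by
  intro t ht
  have hLS' : ConvexLogSobolev μ (d ^ 2 / 2) := hLS
  obtain ⟨m, M, hfmM⟩ := exists_ae_mem_Icc_of_ae_mem_isCompact
    (isCompact_setOf_forall_abs_le (d / 2)) hdiff.continuous.continuousOn hsupp
  have hexp := integrableExpSet_eq_univ_of_ae_mem_Icc hdiff.continuous.aemeasurable hfmM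
  have hmem (l : ℝ) : l ∈ interior (integrableExpSet f μ) := by simp [hexp]
  have hcgf (Λ : ℝ) (hΛ : 0 < Λ) (hcΛ : d ^ 2 / 2 * a * Λ < 1) :
      cgf f μ Λ ≤ 2 * (d ^ 2 / 2 * b) * Λ ^ 2 / (2 * (1 - d ^ 2 / 2 * a * Λ)) := by
    rw [mul_assoc, mul_div_mul_left _ _ (two_ne_zero' ℝ)]
    refine le_div_of_mul_deriv_le (H := cgf f μ) hΛ hcΛ
      (fun l _ => (analyticAt_cgf (hmem l)).differentiableAt) cgf_zero
      (by simp [deriv_cgf_zero (hmem 0), hmean]) fun l hl =>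
        hLS'.mul_one_sub_mul_deriv_cgf_le (by positivity) hexp hconv hdiff (hsupp.mono hself)
          hl.1.le
  calc (μ {x | f x > t}).toReal ≤ μ.real {x | t ≤ f x} :=
        measureReal_mono fun x (hx : t < f x) => hx.le
    _ ≤ exp (-t ^ 2 / (2 * (2 * (d ^ 2 / 2 * b) + d ^ 2 / 2 * a * t))) :=
        measureReal_ge_le_exp_of_cgf_le (by positivity) ht hexp hcgf
    _ = exp (-t ^ 2 / (d ^ 2 * (2 * b + a * t))) := by ring_nf

theorem stmt_7 (n : ℕ) (hn : 0 < n)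
    (μ : Measure (EuclideanSpace ℝ (Fin n))) [IsProbabilityMeasure μ]
    (f : EuclideanSpace ℝ (Fin n) → ℝ) (d a b : ℝ)
    (hd : 0 < d) (ha : 0 ≤ a) (hb : 0 ≤ b)
    (hconv : ConvexOn ℝ Set.univ f)
    (hdiff : Differentiable ℝ f)
    (hsupp : ∀ᵐ x ∂μ, ∀ i, |x i| ≤ d / 2)
    (hmean : ∫ x, f x ∂μ = 0)
    (hself : ∀ x : EuclideanSpace ℝ (Fin n),
      (∀ i, |x i| ≤ d / 2) → ‖gradient f x‖ ^ 2 ≤ a * f x + b)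
    (hLS : ∀ g : EuclideanSpace ℝ (Fin n) → ℝ,
      ConvexOn ℝ Set.univ g → Differentiable ℝ g →
      (∫ x, Real.exp (g x) * g x ∂μ)
        - (∫ x, Real.exp (g x) ∂μ) * Real.log (∫ x, Real.exp (g x) ∂μ)
      ≤ d ^ 2 / 2 * ∫ x, Real.exp (g x) * ‖gradient g x‖ ^ 2 ∂μ) :
    ∀ t : ℝ, 0 < t →
      (μ {x | f x > t}).toReal ≤ Real.exp (-t ^ 2 / (d ^ 2 * (2 * b + a * t))) :=
  stmt_7_general n μ f d a b ha hconv hdiff hsupp hmean hself hLS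
end

section
/- If the sequence F : ℕ → ℝ satisfies |F(t)| ≤ K(t+1)^{1/2-α} for some constants K > 0 and α ∈ (0, 1/2], then (1/T²) Σ_{t=0}^{T-1} F(t)² (T-t+1)/(t+1) → 0 as T → ∞. -/
/-!
Since `|F t| ≤ K (t+1)^{1/2-α}`, the sequence `c t = F(t)² / (t+1)` is bounded by
`K² (t+1)^{-2α}` and so tends to `0`. For `t < T` the weight `(T - t + 1) / T²` is at most
`2 / T`, so the expression is dominated by twice the Cesàro mean of `|c|`, which tends to `0`.
-/

open Finset Filter Topology

theorem tendsto_inv_sq_mul_sum_mul_sub_add_one {c : ℕ → ℝ} (hc : Tendsto c atTop (𝓝 0)) :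
    Tendsto (fun T : ℕ => (1 / (T : ℝ) ^ 2) * ∑ t ∈ range T, c t * ((T : ℝ) - t + 1))
      atTop (𝓝 0) := by
  have habs : Tendsto (fun t => |c t|) atTop (𝓝 0) := by simpa using hc.abs
  have hcesaro : Tendsto (fun T : ℕ => 2 * ((T : ℝ)⁻¹ * ∑ t ∈ range T, |c t|)) atTop (𝓝 0) := by
    simpa using habs.cesaro.const_mul 2
  refine squeeze_zero_norm' ?_ hcesaro
  filter_upwards [eventually_ge_atTop 1] with T hT
  have hT : (1 : ℝ) ≤ T := by exact_mod_cast hT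
  have hweight : ∀ t ∈ range T, ‖c t * ((T : ℝ) - t + 1)‖ ≤ |c t| * (2 * T) := by
    intro t ht
    have htT : (t : ℝ) < T := by exact_mod_cast mem_range.1 ht
    have hw : 0 ≤ (T : ℝ) - t + 1 := by linarith
    rw [norm_mul, Real.norm_eq_abs, Real.norm_eq_abs, abs_of_nonneg hw]
    gcongr
    linarith [(t.cast_nonneg : (0 : ℝ) ≤ t)]
  calc ‖(1 / (T : ℝ) ^ 2) * ∑ t ∈ range T, c t * ((T : ℝ) - t + 1)‖
      = 1 / (T : ℝ) ^ 2 * ‖∑ t ∈ range T, c t * ((T : ℝ) - t + 1)‖ := by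
        rw [norm_mul, Real.norm_of_nonneg (by positivity)]
    _ ≤ 1 / (T : ℝ) ^ 2 * ∑ t ∈ range T, |c t| * (2 * T) := by
        gcongr
        exact (norm_sum_le _ _).trans (sum_le_sum hweight)
    _ = 2 * ((T : ℝ)⁻¹ * ∑ t ∈ range T, |c t|) := by
        rw [← sum_mul]
        field_simp

theorem sq_div_succ_le_of_abs_le_rpow {x K α : ℝ} (hx : 0 ≤ x) {y : ℝ}
    (hy : |y| ≤ K * (x + 1) ^ ((1 : ℝ) / 2 - α)) :
    y ^ 2 / (x + 1) ≤ K ^ 2 * (x + 1) ^ (-(2 * α)) := by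
  have hx1 : 0 < x + 1 := by linarith
  have hsq : y ^ 2 ≤ K ^ 2 * (x + 1) ^ (1 - 2 * α) := by
    calc y ^ 2 = |y| ^ 2 := (sq_abs y).symm
      _ ≤ (K * (x + 1) ^ ((1 : ℝ) / 2 - α)) ^ 2 := pow_le_pow_left₀ (abs_nonneg y) hy 2
      _ = K ^ 2 * (x + 1) ^ (1 - 2 * α) := by
        rw [mul_pow, ← Real.rpow_mul_natCast hx1.le]
        congr 2
        push_cast
        ring
  calc y ^ 2 / (x + 1) ≤ K ^ 2 * (x + 1) ^ (1 - 2 * α) / (x + 1) := by gcongr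
    _ = K ^ 2 * (x + 1) ^ (-(2 * α)) := by
        rw [mul_div_assoc, ← Real.rpow_sub_one hx1.ne']
        ring_nf

theorem tendsto_sq_div_succ_of_abs_le_rpow {F : ℕ → ℝ} {K α : ℝ} (hα : 0 < α)
    (hF : ∀ t : ℕ, |F t| ≤ K * ((t : ℝ) + 1) ^ ((1 : ℝ) / 2 - α)) :
    Tendsto (fun t : ℕ => F t ^ 2 / ((t : ℝ) + 1)) atTop (𝓝 0) := by
  have hdecay : Tendsto (fun t : ℕ => K ^ 2 * ((t : ℝ) + 1) ^ (-(2 * α))) atTop (𝓝 0) := by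
    have hshift : Tendsto (fun t : ℕ => (t : ℝ) + 1) atTop atTop :=
      tendsto_atTop_add_const_right _ 1 tendsto_natCast_atTop_atTop
    simpa using ((tendsto_rpow_neg_atTop (by linarith)).comp hshift).const_mul (K ^ 2)
  exact squeeze_zero (fun t => by positivity)
    (fun t => sq_div_succ_le_of_abs_le_rpow t.cast_nonneg (hF t)) hdecay

theorem stmt_12_general (F : ℕ → ℝ) (K α : ℝ) (hα : 0 < α)
    (hF : ∀ t : ℕ, |F t| ≤ K * ((t : ℝ) + 1) ^ ((1 : ℝ) / 2 - α)) :
    Tendsto (fun T : ℕ =>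
        (1 / (T : ℝ) ^ 2) * ∑ t ∈ Finset.range T,
          F t ^ 2 * ((T : ℝ) - t + 1) / ((t : ℝ) + 1))
      atTop (nhds 0) := by
  simpa only [mul_div_right_comm] using
    tendsto_inv_sq_mul_sum_mul_sub_add_one (tendsto_sq_div_succ_of_abs_le_rpow hα hF)

theorem stmt_12 (F : ℕ → ℝ) (K α : ℝ) (hK : 0 < K) (hα : 0 < α) (hα' : α ≤ 1 / 2)
    (hF : ∀ t : ℕ, |F t| ≤ K * ((t : ℝ) + 1) ^ ((1 : ℝ) / 2 - α)) :
    Tendsto (fun T : ℕ =>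
        (1 / (T : ℝ) ^ 2) * ∑ t ∈ Finset.range T,
          F t ^ 2 * ((T : ℝ) - t + 1) / ((t : ℝ) + 1))
      atTop (nhds 0) :=
  stmt_12_general F K α hα hF
end
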